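/- arXiv:2303.14577 — 3 statements merged into one kernel-verified Lean document; each statement's English description precedes it below -/
import Mathlib

section
/- If a monoid M acts on a set X by injections and the action has finite big Ramsey degree t, then there exists a big Ramsey colouring χ : X → [t], i.e., a colouring with t colours that is both persistent and universal. -/
/-!
By minimality of `t` some colouring `ψ` takes at least `t` values on every `p • X`, and by
`HasDegLE M X t` exactly `t` values on some `p₀ • X`. Since `p₀ * p • X ⊆ p₀ • X`, the colouring
`x ↦ ψ (p₀ • x)` then takes the same `t` values on every `p • X`: relabelled by `Fin t` it is
persistent. A persistent `χ` with `t` colours is universal: for any `ψ`, the pair colouring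
`(χ, ψ)` takes at most `t` values on some `p * q • X`, while its first coordinate alone already
takes all `t`, so the second coordinate is a function of the first there.
-/

/-- The action colouring-theoretic statement: every finite colouring takes at most `t`
values on some set `p • X`. -/
def HasDegLE (M X : Type) [Monoid M] [MulAction M X] (t : ℕ) : Prop :=
  ∀ (l : ℕ) (ψ : X → Fin l), ∃ p : M,
    (ψ '' Set.range (fun x : X => p • x)).ncard ≤ t

/-- `χ` is persistent: it attains all `k` colours on every `p • X`. -/
def Persistent (M X : Type) [Monoid M] [MulAction M X] {k : ℕ} (χ : X → Fin k) : Prop :=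
  ∀ p : M, Set.range (fun x : X => χ (p • x)) = Set.univ

/-- `χ` is universal: every colouring factors through `χ` on some `p*q • X`. -/
def UniversalCol (M X : Type) [Monoid M] [MulAction M X] {k : ℕ} (χ : X → Fin k) : Prop :=
  ∀ (l : ℕ) (ψ : X → Fin l) (p : M), ∃ (q : M) (f : Fin k → Fin l),
    ∀ x : X, ψ ((p * q) • x) = f (χ ((p * q) • x))

theorem Function.exists_eq_comp_of_injOn_fst {Y A B : Type*} {g : Y → A} {h : Y → B}
    (hg : Function.Surjective g) (hinj : Set.InjOn Prod.fst (Set.range fun y => (g y, h y))) :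
    ∃ f : A → B, ∀ y, h y = f (g y) :=
  ⟨h ∘ Function.surjInv hg, fun y =>
    congrArg Prod.snd (hinj ⟨y, rfl⟩ ⟨Function.surjInv hg (g y), rfl⟩
      (Function.surjInv_eq hg (g y)).symm)⟩

section

variable {M X : Type} [Monoid M] [MulAction M X]

theorem image_range_smul (p : M) {C : Type*} (ψ : X → C) :
    ψ '' Set.range (fun x : X => p • x) = Set.range fun x => ψ (p • x) :=
  (Set.range_comp ψ _).symm

theorem HasDegLE.exists_ncard_image_le {t : ℕ} (h : HasDegLE M X t) {C : Type*} [Finite C]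
    (ψ : X → C) : ∃ p : M, (ψ '' Set.range (fun x : X => p • x)).ncard ≤ t := by
  let e := Finite.equivFin C
  obtain ⟨p, hp⟩ := h _ (e ∘ ψ)
  refine ⟨p, ?_⟩
  rwa [Set.image_comp, Set.ncard_image_of_injective _ e.injective] at hp

theorem exists_colouring_le_ncard_image {t : ℕ} (hmin : ∀ s : ℕ, HasDegLE M X s → t ≤ s) :
    ∃ (l : ℕ) (ψ : X → Fin l), ∀ p : M, t ≤ (ψ '' Set.range (fun x : X => p • x)).ncard := by
  cases t with
  | zero => exact ⟨1, fun _ => 0, fun _ => Nat.zero_le _⟩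
  | succ s =>
    have hs : ¬ HasDegLE M X s := fun h => absurd (hmin s h) (Nat.not_succ_le_self s)
    simp only [HasDegLE, not_forall, not_exists, not_le] at hs
    exact hs

theorem range_comp_smul_eq_of_ncard_le {C : Type*} [Finite C] {φ : X → C}
    (h : ∀ p : M, (Set.range φ).ncard ≤ (Set.range fun x => φ (p • x)).ncard) (p : M) :
    Set.range (fun x => φ (p • x)) = Set.range φ :=
  Set.eq_of_subset_of_ncard_le (Set.range_comp_subset_range (fun x => p • x) φ) (h p)

theorem persistent_comp_rangeFactorization {C : Type*} {φ : X → C} {k : ℕ}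
    (e : Set.range φ ≃ Fin k) (h : ∀ p : M, Set.range (fun x => φ (p • x)) = Set.range φ) :
    Persistent M X (e ∘ Set.rangeFactorization φ) := by
  intro p
  refine Set.eq_univ_of_forall fun c => ?_
  obtain ⟨x, hx⟩ : (e.symm c : C) ∈ Set.range fun x => φ (p • x) := by
    rw [h p]
    exact (e.symm c).2
  refine ⟨x, ?_⟩
  simp only [Function.comp_apply, Set.rangeFactorization, hx, Subtype.coe_eta,
    Equiv.apply_symm_apply]

theorem HasDegLE.exists_persistent {t : ℕ} (hdeg : HasDegLE M X t) {C : Type*} [Finite C]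
    {ψ : X → C} (hψ : ∀ p : M, t ≤ (ψ '' Set.range (fun x : X => p • x)).ncard) :
    ∃ χ : X → Fin t, Persistent M X χ := by
  obtain ⟨p₀, hp₀⟩ := hdeg.exists_ncard_image_le ψ
  set φ : X → C := fun x => ψ (p₀ • x)
  rw [image_range_smul] at hp₀
  have hstable := range_comp_smul_eq_of_ncard_le (M := M) (φ := φ) fun p => by
    simpa only [φ, image_range_smul, ← mul_smul] using hp₀.trans (hψ (p₀ * p))
  have hcard : Nat.card (Set.range φ) = t := by
    rw [Nat.card_coe_set_eq]
    exact le_antisymm hp₀ (image_range_smul p₀ ψ ▸ hψ p₀)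
  exact ⟨_, persistent_comp_rangeFactorization (Finite.equivFinOfCardEq hcard) hstable⟩

theorem Persistent.universalCol {k : ℕ} {χ : X → Fin k} (hχ : Persistent M X χ)
    (hdeg : HasDegLE M X k) : UniversalCol M X χ := by
  intro l ψ p
  obtain ⟨q, hq⟩ := hdeg.exists_ncard_image_le fun x => (χ (p • x), ψ (p • x))
  simp only [image_range_smul, ← mul_smul] at hq
  set S := Set.range fun x => (χ ((p * q) • x), ψ ((p * q) • x))
  have hfst : Prod.fst '' S = Set.univ := by
    rw [← Set.range_comp]
    exact hχ (p * q)
  have hcard : (Prod.fst '' S).ncard = S.ncard := by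
    refine le_antisymm (Set.ncard_image_le (Set.toFinite S)) ?_
    rwa [hfst, Set.ncard_univ, Nat.card_eq_fintype_card, Fintype.card_fin]
  obtain ⟨f, hf⟩ := Function.exists_eq_comp_of_injOn_fst (Set.range_eq_univ.mp (hχ (p * q)))
    (Set.injOn_of_ncard_image_eq hcard)
  exact ⟨q, f, hf⟩

end

theorem exists_bigRamseyColouring_of_finite_degree_general
    (M X : Type) [Monoid M] [MulAction M X]
    (t : ℕ) (hdeg : HasDegLE M X t)
    (hmin : ∀ s : ℕ, HasDegLE M X s → t ≤ s) :
    ∃ χ : X → Fin t, Persistent M X χ ∧ UniversalCol M X χ := by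
  obtain ⟨l, ψ, hψ⟩ := exists_colouring_le_ncard_image hmin
  obtain ⟨χ, hχ⟩ := hdeg.exists_persistent hψ
  exact ⟨χ, hχ, hχ.universalCol hdeg⟩

theorem exists_bigRamseyColouring_of_finite_degree
    (M X : Type) [Monoid M] [MulAction M X]
    (hinj : ∀ p : M, Function.Injective (fun x : X => p • x))
    (t : ℕ) (ht : 1 ≤ t) (hdeg : HasDegLE M X t)
    (hmin : ∀ s : ℕ, HasDegLE M X s → t ≤ s) :
    ∃ χ : X → Fin t, Persistent M X χ ∧ UniversalCol M X χ :=
  exists_bigRamseyColouring_of_finite_degree_general M X t hdeg hmin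
end

section
/- The space Pum_d of d-pumpkins is a compact subset of the space of nonempty compact subsets of SCK(Ball_d) with the Hausdorff metric. -/
open TopologicalSpace

/-- `Ball d = [-1,1]^d` inside `ℝ^d` with the sup metric. -/
def Ball (d : ℕ) : Set (Fin d → ℝ) := {x | ∀ i, |x i| ≤ 1}

/-- The set of nonempty symmetric convex compact subsets of `Ball d`, inside the
hyperspace of nonempty compact subsets of `ℝ^d` with the Hausdorff metric. -/
def SCK (d : ℕ) : Set (NonemptyCompacts (Fin d → ℝ)) :=
  {A | (A : Set (Fin d → ℝ)) ⊆ Ball d ∧ Convex ℝ (A : Set (Fin d → ℝ)) ∧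
    (A : Set (Fin d → ℝ)) = -(A : Set (Fin d → ℝ))}

/-- The metric space `SCK(Ball_d)`, a subspace of the hyperspace with Hausdorff metric. -/
def SCKSpace (d : ℕ) : Type := ↥(SCK d)

noncomputable instance (d : ℕ) : MetricSpace (SCKSpace d) :=
  inferInstanceAs (MetricSpace ↥(SCK d))

/-- The underlying subset of `ℝ^d` of an element of `SCKSpace d`. -/
def toSet {d : ℕ} (A : SCKSpace d) : Set (Fin d → ℝ) := (A.1 : Set (Fin d → ℝ))

section BallCompact

open Metric Filter

lemma Ball_eq (d : ℕ) : Ball d = closedBall (0 : Fin d → ℝ) 1 := by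
  ext x
  simp only [Ball, Set.mem_setOf_eq, mem_closedBall]
  rw [dist_pi_le_iff zero_le_one]
  simp [Real.dist_eq]

lemma Ball_isCompact (d : ℕ) : IsCompact (Ball d) := by
  rw [Ball_eq]; exact isCompact_closedBall _ _

lemma Ball_isClosed (d : ℕ) : IsClosed (Ball d) := by
  rw [Ball_eq]; exact Metric.isClosed_closedBall

end BallCompact

section SCKCompact

open Metric Filter

variable {M : Type*} [MetricSpace M]

/-- Push a nonempty compact of a subtype into the ambient space. -/
noncomputable def NCmap (s : Set M) (K : NonemptyCompacts s) : NonemptyCompacts M :=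
  ⟨⟨Subtype.val '' (K : Set s), K.isCompact.image continuous_subtype_val⟩,
    K.nonempty.image _⟩

lemma NCmap_isometry (s : Set M) : Isometry (NCmap s) := by
  refine Isometry.of_dist_eq fun K L => ?_
  rw [NonemptyCompacts.dist_eq, NonemptyCompacts.dist_eq]
  exact Metric.hausdorffDist_image isometry_subtype_coe

lemma isCompact_range_NCmap (s : Set M) (hs : IsCompact s) :
    IsCompact (Set.range (NCmap s)) := by
  haveI : CompactSpace s := isCompact_iff_compactSpace.mp hs
  exact isCompact_range (NCmap_isometry s).continuous

lemma mem_range_NCmap {s : Set M} (hs : IsCompact s) (A : NonemptyCompacts M)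
    (hA : (A : Set M) ⊆ s) : A ∈ Set.range (NCmap s) := by
  haveI : CompactSpace s := isCompact_iff_compactSpace.mp hs
  obtain ⟨a, ha⟩ := A.nonempty
  refine ⟨⟨⟨Subtype.val ⁻¹' (A : Set M), ?_⟩, ⟨⟨a, hA ha⟩, ha⟩⟩, ?_⟩
  · exact (A.isCompact.isClosed.preimage continuous_subtype_val).isCompact
  · apply NonemptyCompacts.ext
    simp only [NCmap, NonemptyCompacts.coe_mk, Compacts.coe_mk]
    show Subtype.val '' (Subtype.val ⁻¹' (A : Set M) : Set s) = (A : Set M)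
    rw [Set.image_preimage_eq_inter_range, Subtype.range_coe]
    exact Set.inter_eq_left.mpr hA

end SCKCompact

section NCLemmas

open Metric EMetric Filter

variable {M : Type*} [MetricSpace M]

lemma NC.edist_ne_top (s t : NonemptyCompacts M) :
    hausdorffEdist (s : Set M) (t : Set M) ≠ ⊤ :=
  hausdorffEdist_ne_top_of_nonempty_of_bounded s.nonempty t.nonempty
    s.isCompact.isBounded t.isCompact.isBounded

lemma NC.mem_of_tendsto {K : ℕ → NonemptyCompacts M} {L : NonemptyCompacts M}
    (hK : Tendsto K atTop (nhds L)) {x : ℕ → M} (hx : ∀ n, x n ∈ K n)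
    {y : M} (hxy : Tendsto x atTop (nhds y)) : y ∈ L := by
  have h1 : ∀ n, infDist y (L : Set M) ≤ dist y (x n) + dist (K n) L := by
    intro n
    calc infDist y (L : Set M) ≤ infDist (x n) (L : Set M) + dist y (x n) :=
          infDist_le_infDist_add_dist
      _ ≤ (infDist (x n) (K n : Set M) + hausdorffDist (K n : Set M) (L : Set M))
            + dist y (x n) := by
          gcongr; exact infDist_le_infDist_add_hausdorffDist (NC.edist_ne_top _ _)
      _ = dist y (x n) + dist (K n) L := by
          rw [infDist_zero_of_mem (hx n), NonemptyCompacts.dist_eq]; ring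
  have h2 : Tendsto (fun n => dist y (x n) + dist (K n) L) atTop (nhds 0) := by
    have ha : Tendsto (fun n => dist y (x n)) atTop (nhds (dist y y)) :=
      (tendsto_const_nhds : Tendsto (fun _ : ℕ => y) atTop (nhds y)).dist hxy
    have hb : Tendsto (fun n => dist (K n) L) atTop (nhds (dist L L)) :=
      hK.dist (tendsto_const_nhds : Tendsto (fun _ : ℕ => L) atTop (nhds L))
    simpa using ha.add hb
  have h3 : infDist y (L : Set M) ≤ 0 :=
    ge_of_tendsto' h2 h1
  have h4 : infDist y (L : Set M) = 0 := le_antisymm h3 infDist_nonneg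
  exact (L.isCompact.isClosed.mem_iff_infDist_zero L.nonempty).2 h4

lemma NC.exists_tendsto {K : ℕ → NonemptyCompacts M} {L : NonemptyCompacts M}
    (hK : Tendsto K atTop (nhds L)) {y : M} (hy : y ∈ L) :
    ∃ x : ℕ → M, (∀ n, x n ∈ K n) ∧ Tendsto x atTop (nhds y) := by
  have h : ∀ n, ∃ z ∈ K n, infDist y (K n : Set M) = dist y z := fun n =>
    (K n).isCompact.exists_infDist_eq_dist (K n).nonempty y
  choose x hxm hxd using h
  refine ⟨x, hxm, ?_⟩
  rw [tendsto_iff_dist_tendsto_zero]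
  have hle : ∀ n, dist (x n) y ≤ dist L (K n) := by
    intro n
    rw [dist_comm, ← hxd n, NonemptyCompacts.dist_eq]
    exact infDist_le_hausdorffDist_of_mem hy (NC.edist_ne_top _ _)
  have h2 : Tendsto (fun n => dist L (K n)) atTop (nhds 0) := by
    have := (tendsto_const_nhds : Tendsto (fun _ : ℕ => L) atTop (nhds L)).dist hK
    simpa using this
  exact squeeze_zero (fun n => dist_nonneg) hle h2

lemma NC.subset_of_tendsto {A B : ℕ → NonemptyCompacts M} {A' B' : NonemptyCompacts M}
    (hA : Tendsto A atTop (nhds A')) (hB : Tendsto B atTop (nhds B'))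
    (h : ∀ n, (A n : Set M) ⊆ (B n : Set M)) : (A' : Set M) ⊆ (B' : Set M) := by
  intro a ha
  obtain ⟨x, hxm, hxt⟩ := NC.exists_tendsto hA ha
  exact NC.mem_of_tendsto hB (fun n => h n (hxm n)) hxt

lemma NC.dist_mono {A X Y : NonemptyCompacts M} (hAX : (A : Set M) ⊆ X)
    (hXY : (X : Set M) ⊆ Y) : dist A X ≤ dist A Y := by
  rw [NonemptyCompacts.dist_eq, NonemptyCompacts.dist_eq]
  refine hausdorffDist_le_of_infDist hausdorffDist_nonneg (fun a ha => ?_) (fun x hx => ?_)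
  · rw [infDist_zero_of_mem (hAX ha)]; exact hausdorffDist_nonneg
  · calc infDist x (A : Set M) ≤ hausdorffDist (Y : Set M) (A : Set M) :=
          infDist_le_hausdorffDist_of_mem (hXY hx) (NC.edist_ne_top _ _)
      _ = hausdorffDist (A : Set M) (Y : Set M) := hausdorffDist_comm

end NCLemmas

section SCKclosed

open Metric Filter

lemma SCK_isClosed (d : ℕ) : IsClosed (SCK d) := by
  refine IsSeqClosed.isClosed fun A A' hA hA' => ?_
  have hmem : ∀ {y : Fin d → ℝ} {x : ℕ → Fin d → ℝ}, (∀ n, x n ∈ (A n : Set (Fin d → ℝ))) →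
      Tendsto x atTop (nhds y) → y ∈ (A' : Set (Fin d → ℝ)) := fun hx hxy =>
    NC.mem_of_tendsto hA' hx hxy
  have hsel : ∀ {y : Fin d → ℝ}, y ∈ (A' : Set (Fin d → ℝ)) →
      ∃ x : ℕ → Fin d → ℝ, (∀ n, x n ∈ (A n : Set (Fin d → ℝ))) ∧ Tendsto x atTop (nhds y) :=
    fun hy => NC.exists_tendsto hA' hy
  refine ⟨?_, ?_, ?_⟩
  · -- subset of Ball
    intro y hy
    obtain ⟨x, hx, hxy⟩ := hsel hy
    exact (Ball_isClosed d).mem_of_tendsto hxy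
      (Eventually.of_forall fun n => (hA n).1 (hx n))
  · -- convex
    intro y hy z hz a b ha hb hab
    obtain ⟨x, hx, hxy⟩ := hsel hy
    obtain ⟨w, hw, hwz⟩ := hsel hz
    have hcomb : ∀ n, a • x n + b • w n ∈ (A n : Set (Fin d → ℝ)) := fun n =>
      (hA n).2.1 (hx n) (hw n) ha hb hab
    have : Tendsto (fun n => a • x n + b • w n) atTop (nhds (a • y + b • z)) :=
      ((hxy.const_smul a).add (hwz.const_smul b))
    exact hmem hcomb this
  · -- symmetric
    have key : ∀ y ∈ (A' : Set (Fin d → ℝ)), -y ∈ (A' : Set (Fin d → ℝ)) := by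
      intro y hy
      obtain ⟨x, hx, hxy⟩ := hsel hy
      have hnx : ∀ n, -x n ∈ (A n : Set (Fin d → ℝ)) := by
        intro n
        have := (hA n).2.2
        rw [this]
        simpa using hx n
      exact hmem hnx hxy.neg
    ext y
    constructor
    · intro hy
      rw [Set.mem_neg]
      exact key y hy
    · intro hy
      rw [Set.mem_neg] at hy
      simpa using key _ hy

lemma SCK_isCompact (d : ℕ) : IsCompact (SCK d) := by
  refine IsCompact.of_isClosed_subset (isCompact_range_NCmap (Ball d) (Ball_isCompact d))
    (SCK_isClosed d) ?_
  intro A hA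
  exact mem_range_NCmap (Ball_isCompact d) A hA.1

noncomputable instance (d : ℕ) : CompactSpace (SCKSpace d) :=
  isCompact_iff_compactSpace.mp (SCK_isCompact d)

noncomputable instance (d : ℕ) : CompactSpace (NonemptyCompacts (SCKSpace d)) :=
  inferInstance

end SCKclosed

section SCKSpaceLemmas

open Metric Filter

variable {d : ℕ}

lemma SCK.val_isometry : Isometry (fun X : SCKSpace d => X.1) :=
  fun _ _ => rfl

lemma SCK.tendsto_val {X : ℕ → SCKSpace d} {Y : SCKSpace d}
    (h : Tendsto X atTop (nhds Y)) :
    Tendsto (fun n => (X n).1) atTop (nhds Y.1) :=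
  (SCK.val_isometry.continuous.tendsto Y).comp h

lemma SCK.dist_eq (X Y : SCKSpace d) : dist X Y = dist X.1 Y.1 := rfl

lemma toSet_inj {X Y : SCKSpace d} (h : toSet X = toSet Y) : X = Y :=
  Subtype.ext (NonemptyCompacts.ext h)

lemma SCK.dist_mono {A X Y : SCKSpace d} (hAX : toSet A ⊆ toSet X)
    (hXY : toSet X ⊆ toSet Y) : dist A X ≤ dist A Y := by
  rw [SCK.dist_eq, SCK.dist_eq]
  exact NC.dist_mono hAX hXY

lemma SCK.subset_of_tendsto {A B : ℕ → SCKSpace d} {A' B' : SCKSpace d}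
    (hA : Tendsto A atTop (nhds A')) (hB : Tendsto B atTop (nhds B'))
    (h : ∀ n, toSet (A n) ⊆ toSet (B n)) : toSet A' ⊆ toSet B' :=
  NC.subset_of_tendsto (SCK.tendsto_val hA) (SCK.tendsto_val hB) h

lemma isClosed_supset (A : SCKSpace d) : IsClosed {X : SCKSpace d | toSet A ⊆ toSet X} := by
  refine IsSeqClosed.isClosed fun X X' hX hX' => ?_
  exact SCK.subset_of_tendsto (tendsto_const_nhds : Tendsto (fun _ : ℕ => A) atTop (nhds A))
    hX' hX

lemma isClosed_subset (A : SCKSpace d) : IsClosed {X : SCKSpace d | toSet X ⊆ toSet A} := by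
  refine IsSeqClosed.isClosed fun X X' hX hX' => ?_
  exact SCK.subset_of_tendsto hX'
    (tendsto_const_nhds : Tendsto (fun _ : ℕ => A) atTop (nhds A)) hX

/-- A nonempty compact chain (under `toSet ⊆`) has a maximum. -/
lemma chain_max {K : Set (SCKSpace d)} (hK : IsCompact K) (hne : K.Nonempty)
    (hchain : ∀ X ∈ K, ∀ Y ∈ K, toSet X ⊆ toSet Y ∨ toSet Y ⊆ toSet X) :
    ∃ Mx ∈ K, ∀ X ∈ K, toSet X ⊆ toSet Mx := by
  haveI : Nonempty K := hne.to_subtype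
  set U : K → Set (SCKSpace d) := fun X => {Y ∈ K | toSet X.1 ⊆ toSet Y} with hU
  have hUc : ∀ X, IsCompact (U X) := fun X =>
    hK.inter_right (isClosed_supset X.1)
  have hUn : ∀ X, (U X).Nonempty := fun X => ⟨X.1, X.2, subset_rfl⟩
  have hUd : Directed (· ⊇ ·) U := by
    intro X Y
    rcases hchain X.1 X.2 Y.1 Y.2 with h | h
    · exact ⟨Y, fun Z hZ => ⟨hZ.1, h.trans hZ.2⟩, fun Z hZ => hZ⟩
    · exact ⟨X, fun Z hZ => hZ, fun Z hZ => ⟨hZ.1, h.trans hZ.2⟩⟩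
  obtain ⟨Mx, hMx⟩ := IsCompact.nonempty_iInter_of_directed_nonempty_isCompact_isClosed
    U hUd hUn hUc (fun X => (hUc X).isClosed)
  simp only [Set.mem_iInter] at hMx
  obtain ⟨X₀⟩ := (inferInstance : Nonempty K)
  exact ⟨Mx, (hMx X₀).1, fun X hX => (hMx ⟨X, hX⟩).2⟩

/-- A nonempty compact chain (under `toSet ⊆`) has a minimum. -/
lemma chain_min {K : Set (SCKSpace d)} (hK : IsCompact K) (hne : K.Nonempty)
    (hchain : ∀ X ∈ K, ∀ Y ∈ K, toSet X ⊆ toSet Y ∨ toSet Y ⊆ toSet X) :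
    ∃ Mn ∈ K, ∀ X ∈ K, toSet Mn ⊆ toSet X := by
  haveI : Nonempty K := hne.to_subtype
  set U : K → Set (SCKSpace d) := fun X => {Y ∈ K | toSet Y ⊆ toSet X.1} with hU
  have hUc : ∀ X, IsCompact (U X) := fun X =>
    hK.inter_right (isClosed_subset X.1)
  have hUn : ∀ X, (U X).Nonempty := fun X => ⟨X.1, X.2, subset_rfl⟩
  have hUd : Directed (· ⊇ ·) U := by
    intro X Y
    rcases hchain X.1 X.2 Y.1 Y.2 with h | h
    · exact ⟨X, fun Z hZ => hZ, fun Z hZ => ⟨hZ.1, hZ.2.trans h⟩⟩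
    · exact ⟨Y, fun Z hZ => ⟨hZ.1, hZ.2.trans h⟩, fun Z hZ => hZ⟩
  obtain ⟨Mn, hMn⟩ := IsCompact.nonempty_iInter_of_directed_nonempty_isCompact_isClosed
    U hUd hUn hUc (fun X => (hUc X).isClosed)
  simp only [Set.mem_iInter] at hMn
  obtain ⟨X₀⟩ := (inferInstance : Nonempty K)
  exact ⟨Mn, (hMn X₀).1, fun X hX => (hMn ⟨X, hX⟩).2⟩

end SCKSpaceLemmas

/-- `P` is a `d`-pumpkin: a compact family of symmetric convex compacta containing `{0}`,
containing a member projecting onto `[-1,1]` in every coordinate, and densely linearly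
ordered by inclusion. -/
def IsPumpkin {d : ℕ} (P : Set (SCKSpace d)) : Prop :=
  IsCompact P ∧
  (∃ Z ∈ P, toSet Z = {0}) ∧
  (∃ C ∈ P, ∀ i : Fin d, (fun x => x i) '' toSet C = Set.Icc (-1 : ℝ) 1) ∧
  (∀ A ∈ P, ∀ B ∈ P, toSet A ⊆ toSet B ∨ toSet B ⊆ toSet A) ∧
  (∀ A ∈ P, ∀ B ∈ P, toSet A ⊂ toSet B →
    ∃ C ∈ P, toSet A ⊂ toSet C ∧ toSet C ⊂ toSet B)

/-- The set of all `d`-pumpkins inside the hyperspace `K(SCK(Ball_d))`. -/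
def Pum (d : ℕ) : Set (NonemptyCompacts (SCKSpace d)) :=
  {P | IsPumpkin (P : Set (SCKSpace d))}

section Mid

open Metric Filter

variable {d : ℕ}

/-- In a pumpkin, between nested sets at distance `> ε/2` there is a member at
distance between `ε/3` and `ε/2` from the smaller one. -/
lemma exists_mid {P : Set (SCKSpace d)} (hP : IsPumpkin P) {A B : SCKSpace d}
    (hA : A ∈ P) (hB : B ∈ P) (hAB : toSet A ⊆ toSet B) {ε : ℝ} (hε : 0 < ε)
    (hd : ε / 2 < dist A B) :
    ∃ C ∈ P, toSet A ⊆ toSet C ∧ toSet C ⊆ toSet B ∧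
      ε / 3 ≤ dist A C ∧ dist A C ≤ ε / 2 := by
  obtain ⟨hPc, -, -, hchain, hdense⟩ := hP
  by_contra hcon
  push_neg at hcon
  -- every member of the interval `[A,B]` is at distance `< ε/3` or `> ε/2` from `A`
  have hgap : ∀ X ∈ P, toSet A ⊆ toSet X → toSet X ⊆ toSet B →
      dist A X < ε / 3 ∨ ε / 2 < dist A X := by
    intro X hX h1 h2
    by_contra h
    push_neg at h
    exact absurd (hcon X hX h1 h2 h.1) (not_lt.mpr h.2)
  set Q : Set (SCKSpace d) := {X | X ∈ P ∧ toSet A ⊆ toSet X ∧ toSet X ⊆ toSet B} with hQdef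
  have hQsub : Q ⊆ P := fun X hX => hX.1
  have hQc : IsCompact Q := by
    have : Q = P ∩ ({X | toSet A ⊆ toSet X} ∩ {X | toSet X ⊆ toSet B}) := by
      ext X
      exact ⟨fun h => ⟨h.1, h.2.1, h.2.2⟩, fun h => ⟨h.1, h.2.1, h.2.2⟩⟩
    rw [this]
    exact hPc.inter_right ((isClosed_supset A).inter (isClosed_subset B))
  have hQchain : ∀ X ∈ Q, ∀ Y ∈ Q, toSet X ⊆ toSet Y ∨ toSet Y ⊆ toSet X :=
    fun X hX Y hY => hchain X (hQsub hX) Y (hQsub hY)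
  -- K₁ : members close to A; K₂ : members far from A
  set K₁ : Set (SCKSpace d) := {X ∈ Q | dist A X ≤ ε / 3} with hK₁def
  set K₂ : Set (SCKSpace d) := {X ∈ Q | ε / 2 ≤ dist A X} with hK₂def
  have hK₁c : IsCompact K₁ := hQc.inter_right <|
    isClosed_le (continuous_const.dist continuous_id) continuous_const
  have hK₂c : IsCompact K₂ := hQc.inter_right <|
    isClosed_le continuous_const (continuous_const.dist continuous_id)
  have hK₁ne : K₁.Nonempty := ⟨A, ⟨hA, subset_rfl, hAB⟩, by simp [le_of_lt, hε]⟩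
  have hK₂ne : K₂.Nonempty := ⟨B, ⟨hB, hAB, subset_rfl⟩, le_of_lt hd⟩
  obtain ⟨X', hX'K, hX'max⟩ := chain_max hK₁c hK₁ne
    (fun X hX Y hY => hQchain X hX.1 Y hY.1)
  obtain ⟨Y', hY'K, hY'min⟩ := chain_min hK₂c hK₂ne
    (fun X hX Y hY => hQchain X hX.1 Y hY.1)
  have hXY : toSet X' ⊂ toSet Y' := by
    have hne : dist A X' < dist A Y' := lt_of_le_of_lt hX'K.2
      (lt_of_lt_of_le (by linarith) hY'K.2)
    rcases hQchain X' hX'K.1 Y' hY'K.1 with h | h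
    · refine ⟨h, fun hYX => ?_⟩
      exact absurd (SCK.dist_mono hY'K.1.2.1 hYX) (not_le.mpr hne)
    · exact absurd (SCK.dist_mono hY'K.1.2.1 h) (not_le.mpr hne)
  obtain ⟨Z, hZP, hXZ, hZY⟩ := hdense X' (hQsub hX'K.1) Y' (hQsub hY'K.1) hXY
  have hZQ : Z ∈ Q :=
    ⟨hZP, hX'K.1.2.1.trans hXZ.subset, hZY.subset.trans hY'K.1.2.2⟩
  rcases hgap Z hZP hZQ.2.1 hZQ.2.2 with h | h
  · exact hXZ.not_subset (hX'max Z ⟨hZQ, le_of_lt h⟩)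
  · exact hZY.not_subset (hY'min Z ⟨hZQ, le_of_lt h⟩)

end Mid

section Proj

open Metric Filter

variable {d : ℕ}

lemma proj_full_iff (X : SCKSpace d) (i : Fin d) :
    (fun x => x i) '' toSet X = Set.Icc (-1 : ℝ) 1 ↔ ∃ x ∈ toSet X, x i = 1 := by
  obtain ⟨hball, hconv, hsym⟩ := X.2
  constructor
  · intro h
    have h1 : (1 : ℝ) ∈ (fun x => x i) '' toSet X := by
      rw [h]; exact ⟨by norm_num, le_refl 1⟩
    obtain ⟨x, hx, hxi⟩ := h1
    exact ⟨x, hx, hxi⟩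
  · rintro ⟨x₀, hx₀, hx₀i⟩
    apply Set.Subset.antisymm
    · rintro t ⟨x, hx, rfl⟩
      exact abs_le.mp (hball hx i)
    · intro t ht
      have hneg : -x₀ ∈ toSet X := by
        show -x₀ ∈ (X.1 : Set (Fin d → ℝ))
        rw [hsym]
        exact Set.neg_mem_neg.mpr hx₀
      have h1 : (0 : ℝ) ≤ (1 + t) / 2 := by linarith [ht.1]
      have h2 : (0 : ℝ) ≤ (1 - t) / 2 := by linarith [ht.2]
      have h3 : (1 + t) / 2 + (1 - t) / 2 = 1 := by ring
      have hy : ((1 + t) / 2) • x₀ + ((1 - t) / 2) • (-x₀) ∈ toSet X :=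
        hconv hx₀ hneg h1 h2 h3
      refine ⟨_, hy, ?_⟩
      simp only [Pi.add_apply, Pi.smul_apply, Pi.neg_apply, smul_eq_mul, hx₀i]
      ring

end Proj

section Main

open Metric Filter

variable {d : ℕ}

/-- The element `{0}` of `SCKSpace d`. -/
noncomputable def zeroSCK (d : ℕ) : SCKSpace d :=
  ⟨⟨⟨{0}, isCompact_singleton⟩, Set.singleton_nonempty 0⟩,
    by
      refine ⟨?_, convex_singleton 0, by simp⟩
      rintro x rfl i
      simp⟩

lemma toSet_zeroSCK : toSet (zeroSCK d) = {0} := rfl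

lemma pumpkin_limit {P : ℕ → NonemptyCompacts (SCKSpace d)} {L : NonemptyCompacts (SCKSpace d)}
    (hP : ∀ n, IsPumpkin ((P n : Set (SCKSpace d))))
    (hL : Tendsto P atTop (nhds L)) : IsPumpkin (L : Set (SCKSpace d)) := by
  refine ⟨L.isCompact, ?_, ?_, ?_, ?_⟩
  · -- the zero element
    refine ⟨zeroSCK d, ?_, toSet_zeroSCK⟩
    have hz : ∀ n, zeroSCK d ∈ P n := by
      intro n
      obtain ⟨Z, hZ, hZ0⟩ := (hP n).2.1
      have : Z = zeroSCK d := toSet_inj (by rw [hZ0, toSet_zeroSCK])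
      rwa [this] at hZ
    exact NC.mem_of_tendsto hL hz tendsto_const_nhds
  · -- the big element
    have hsel : ∀ n, ∃ C, C ∈ P n ∧ ∀ i : Fin d, ∃ x ∈ toSet C, x i = 1 := by
      intro n
      obtain ⟨C, hC, hCi⟩ := (hP n).2.2.1
      exact ⟨C, hC, fun i => (proj_full_iff C i).mp (hCi i)⟩
    choose C hCP hCi using hsel
    obtain ⟨Cinf, φ, hφ, hCt⟩ := CompactSpace.tendsto_subseq C
    have hCinfL : Cinf ∈ L :=
      NC.mem_of_tendsto (hL.comp hφ.tendsto_atTop) (fun k => hCP (φ k)) hCt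
    refine ⟨Cinf, hCinfL, fun i => (proj_full_iff Cinf i).mpr ?_⟩
    have hx : ∀ k, ∃ x ∈ toSet (C (φ k)), x i = 1 := fun k => hCi (φ k) i
    choose x hxm hxi using hx
    have hxball : ∀ k, x k ∈ Ball d := fun k => ((C (φ k)).2.1 (hxm k))
    obtain ⟨y, hyB, ψ, hψ, hyt⟩ := (Ball_isCompact d).tendsto_subseq hxball
    refine ⟨y, ?_, ?_⟩
    · exact NC.mem_of_tendsto (SCK.tendsto_val (hCt.comp hψ.tendsto_atTop))
        (fun k => hxm (ψ k)) hyt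
    · have h1 : Tendsto (fun k => x (ψ k) i) atTop (nhds (y i)) :=
        ((continuous_apply i).tendsto y).comp hyt
      have h2 : Tendsto (fun k => x (ψ k) i) atTop (nhds 1) := by
        simp only [hxi]; exact tendsto_const_nhds
      exact tendsto_nhds_unique h1 h2
  · -- chain
    intro A hA B hB
    obtain ⟨a, ham, hat⟩ := NC.exists_tendsto hL hA
    obtain ⟨b, hbm, hbt⟩ := NC.exists_tendsto hL hB
    have hcomp : ∀ n, toSet (a n) ⊆ toSet (b n) ∨ toSet (b n) ⊆ toSet (a n) :=
      fun n => (hP n).2.2.2.1 (a n) (ham n) (b n) (hbm n)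
    by_cases hc : ∃ᶠ n in atTop, toSet (a n) ⊆ toSet (b n)
    · obtain ⟨φ, hφ, hφp⟩ := extraction_of_frequently_atTop hc
      exact Or.inl (SCK.subset_of_tendsto (hat.comp hφ.tendsto_atTop)
        (hbt.comp hφ.tendsto_atTop) hφp)
    · rw [not_frequently] at hc
      have : ∃ᶠ n in atTop, toSet (b n) ⊆ toSet (a n) :=
        (hc.mono fun n hn => (hcomp n).resolve_left hn).frequently
      obtain ⟨φ, hφ, hφp⟩ := extraction_of_frequently_atTop this
      exact Or.inr (SCK.subset_of_tendsto (hbt.comp hφ.tendsto_atTop)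
        (hat.comp hφ.tendsto_atTop) hφp)
  · -- density
    intro A hA B hB hAB
    obtain ⟨a, ham, hat⟩ := NC.exists_tendsto hL hA
    obtain ⟨b, hbm, hbt⟩ := NC.exists_tendsto hL hB
    set ε := dist A B with hεdef
    have hε : 0 < ε := by
      rw [hεdef, dist_pos]
      intro h
      exact hAB.ne (by rw [h])
    -- eventually `a n ⊆ b n`
    have hsub : ∀ᶠ n in atTop, toSet (a n) ⊆ toSet (b n) := by
      by_contra hc
      rw [not_eventually] at hc
      have : ∃ᶠ n in atTop, toSet (b n) ⊆ toSet (a n) :=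
        hc.mono fun n hn => ((hP n).2.2.2.1 (a n) (ham n) (b n) (hbm n)).resolve_left hn
      obtain ⟨φ, hφ, hφp⟩ := extraction_of_frequently_atTop this
      exact hAB.not_subset (SCK.subset_of_tendsto (hbt.comp hφ.tendsto_atTop)
        (hat.comp hφ.tendsto_atTop) hφp)
    have hdt : Tendsto (fun n => dist (a n) (b n)) atTop (nhds ε) := hat.dist hbt
    have hfar : ∀ᶠ n in atTop, 3 * ε / 4 < dist (a n) (b n) :=
      hdt.eventually (eventually_gt_nhds (by linarith))
    obtain ⟨φ, hφ, hφp⟩ := extraction_of_frequently_atTop (hsub.and hfar).frequently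
    have hmid : ∀ k, ∃ C ∈ P (φ k), toSet (a (φ k)) ⊆ toSet C ∧
        toSet C ⊆ toSet (b (φ k)) ∧ ε / 3 ≤ dist (a (φ k)) C ∧
        dist (a (φ k)) C ≤ ε / 2 := by
      intro k
      exact exists_mid (hP (φ k)) (ham (φ k)) (hbm (φ k)) (hφp k).1 hε
        (by linarith [(hφp k).2])
    choose C hCP hC1 hC2 hC3 hC4 using hmid
    obtain ⟨Cinf, ψ, hψ, hCt⟩ := CompactSpace.tendsto_subseq C
    have hCinfL : Cinf ∈ L :=
      NC.mem_of_tendsto (hL.comp ((hφ.comp hψ).tendsto_atTop))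
        (fun k => hCP (ψ k)) hCt
    have haφψ : Tendsto (fun k => a (φ (ψ k))) atTop (nhds A) :=
      hat.comp (hφ.comp hψ).tendsto_atTop
    have hbφψ : Tendsto (fun k => b (φ (ψ k))) atTop (nhds B) :=
      hbt.comp (hφ.comp hψ).tendsto_atTop
    have hACsub : toSet A ⊆ toSet Cinf :=
      SCK.subset_of_tendsto haφψ hCt (fun k => hC1 (ψ k))
    have hCBsub : toSet Cinf ⊆ toSet B :=
      SCK.subset_of_tendsto hCt hbφψ (fun k => hC2 (ψ k))
    have hdAC : Tendsto (fun k => dist (a (φ (ψ k))) (C (ψ k))) atTop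
        (nhds (dist A Cinf)) := haφψ.dist hCt
    have hAC : ε / 3 ≤ dist A Cinf := ge_of_tendsto' hdAC (fun k => hC3 (ψ k))
    have hdCB : Tendsto (fun k => dist (C (ψ k)) (b (φ (ψ k)))) atTop
        (nhds (dist Cinf B)) := hCt.dist hbφψ
    have hCB : ε / 4 ≤ dist Cinf B := by
      refine ge_of_tendsto' hdCB (fun k => ?_)
      have h1 := dist_triangle (a (φ (ψ k))) (C (ψ k)) (b (φ (ψ k)))
      have h2 := (hφp (ψ k)).2
      have h3 := hC4 (ψ k)
      linarith
    refine ⟨Cinf, hCinfL, ⟨hACsub, fun h => ?_⟩, ⟨hCBsub, fun h => ?_⟩⟩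
    · have : A = Cinf := toSet_inj (Set.Subset.antisymm hACsub h)
      rw [this] at hAC
      simp at hAC
      linarith
    · have : Cinf = B := toSet_inj (Set.Subset.antisymm hCBsub h)
      rw [this] at hCB
      simp at hCB
      linarith

end Main

theorem Pum_isCompact (d : ℕ) : IsCompact (Pum d) := by
  have hclosed : IsClosed (Pum d) :=
    IsSeqClosed.isClosed fun P L hP hL => pumpkin_limit hP hL
  exact hclosed.isCompact
end

section
/- For a monoid M acting by injections on a set X, if χ : X → [k] is a universal colouring and ψ : X → [l] is a persistent colouring, then l ≤ k. -/
def PersistentD (M X : Type) [Monoid M] [MulAction M X] {l : ℕ} (ψ : X → Fin l) : Prop :=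
  ∀ p : M, Set.range (fun x : X => ψ (p • x)) = Set.univ

def UniversalD (M X : Type) [Monoid M] [MulAction M X] {k : ℕ} (χ : X → Fin k) : Prop :=
  ∀ (l : ℕ) (ψ : X → Fin l) (p : M), ∃ (q : M) (f : Fin k → Fin l),
    ∀ x : X, ψ ((p * q) • x) = f (χ ((p * q) • x))

theorem UniversalD.exists_factor {M X : Type} [Monoid M] [MulAction M X] {k : ℕ}
    {χ : X → Fin k} (huniv : UniversalD M X χ) {l : ℕ} (ψ : X → Fin l) :
    ∃ (q : M) (f : Fin k → Fin l), ∀ x : X, ψ (q • x) = f (χ (q • x)) := by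
  simpa only [one_mul] using huniv l ψ 1

theorem PersistentD.surjective_of_factor {M X : Type} [Monoid M] [MulAction M X] {k l : ℕ}
    {ψ : X → Fin l} (hpers : PersistentD M X ψ) {χ : X → Fin k} {q : M} {f : Fin k → Fin l}
    (hf : ∀ x : X, ψ (q • x) = f (χ (q • x))) : Function.Surjective f := by
  intro y
  obtain ⟨x, hx⟩ : y ∈ Set.range (fun x : X => ψ (q • x)) := hpers q ▸ Set.mem_univ y
  exact ⟨χ (q • x), (hf x).symm.trans hx⟩

theorem persistent_le_universal_general (M X : Type) [Monoid M] [MulAction M X]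
    (k l : ℕ) (χ : X → Fin k) (ψ : X → Fin l)
    (huniv : UniversalD M X χ) (hpers : PersistentD M X ψ) :
    l ≤ k := by
  obtain ⟨q, f, hf⟩ := huniv.exists_factor ψ
  simpa only [Fintype.card_fin] using Fintype.card_le_of_surjective f (hpers.surjective_of_factor hf)

theorem persistent_le_universal (M X : Type) [Monoid M] [MulAction M X]
    (hinj : ∀ p : M, Function.Injective (fun x : X => p • x))
    (k l : ℕ) (χ : X → Fin k) (ψ : X → Fin l)
    (huniv : UniversalD M X χ) (hpers : PersistentD M X ψ) :
    l ≤ k :=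
  persistent_le_universal_general M X k l χ ψ huniv hpers
end
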